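/- arXiv:2312.01133 — 4 statements merged into one kernel-verified Lean document; each statement's English description precedes it below -/
import Mathlib

section
/- For fixed probability densities p, q with suitable integrability, lim_{γ→0} (1/γ)·(C_γ(q,p) + 1) = −∫ q(x) log p(x) dx, the ordinary cross-entropy; consequently lim_{γ→0} D_γ(q‖p) = D_KL(q‖p). -/
/-!
With `F γ = ∫ q p^γ`, `N γ = ∫ p^(1+γ)` and `G γ = ∫ q^(1+γ)`, the two expressions are
`-(Φ γ - 1)/γ` and `-(Φ γ - Ψ γ)/γ`, where `Φ γ = F γ / (N γ ^ (1/(1+γ)))^γ`,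
`Ψ γ = G γ ^ (1/(1+γ))` and `Φ 0 = Ψ 0 = 1`; so both limits are derivatives at `0`.
On the support of `q` (which is that of `p`) the densities lie in some `[c, M]` with `0 < c`, so
`log p` and `log q` are bounded there and differentiation under the integral sign gives
`F' 0 = ∫ q log p`, `G' 0 = ∫ q log q`. Since `N 0 = 1`, the normalising factor
`(N γ ^ (1/(1+γ)))^γ` has derivative `0` at `0`, hence `Φ' 0 = ∫ q log p` and `Ψ' 0 = ∫ q log q`.
-/

open MeasureTheory Filter Real Set Topology

lemma abs_log_le_max_of_mem_Icc {c M y : ℝ} (hc : 0 < c) (hy : y ∈ Icc c M) :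
    |log y| ≤ max |log c| |log M| :=
  abs_le_max_abs_abs (log_le_log hc hy.1) (log_le_log (hc.trans_le hy.1) hy.2)

section DerivAtZero

variable {f g : ℝ → ℝ} {f' g' : ℝ}

lemma HasDerivAt.rpow_one_div_one_add (hf : HasDerivAt f f' 0) (hf0 : f 0 = 1) :
    HasDerivAt (fun γ => f γ ^ (1 / (1 + γ))) f' 0 := by
  have he : HasDerivAt (fun γ : ℝ => 1 / (1 + γ)) (-1) 0 := by
    simpa using ((hasDerivAt_id (0 : ℝ)).const_add 1).fun_inv (by norm_num)
  simpa [hf0] using hf.rpow he (by simp [hf0])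

lemma HasDerivAt.rpow_self_of_eq_one (hf : HasDerivAt f f' 0) (hf0 : f 0 = 1) :
    HasDerivAt (fun γ => f γ ^ γ) 0 0 := by
  simpa [hf0] using hf.rpow (hasDerivAt_id 0) (by simp [hf0])

lemma HasDerivAt.tendsto_one_div_mul_neg_add (hf : HasDerivAt f f' 0) (hg : HasDerivAt g g' 0)
    (hfg : f 0 = g 0) :
    Tendsto (fun γ => 1 / γ * (-f γ + g γ)) (𝓝[≠] 0) (𝓝 (g' - f')) := by
  refine ((hg.sub hf).tendsto_slope_zero).congr fun γ => ?_
  simp only [smul_eq_mul, zero_add, Pi.sub_apply, hfg]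
  ring

end DerivAtZero

section WeightedPowerIntegral

variable {α : Type*} [MeasurableSpace α] {μ : Measure α} {w g : α → ℝ} {c M : ℝ}

lemma integrable_mul_log_of_mem_Icc (hw : Integrable w μ) (hg : Measurable g) (hc : 0 < c)
    (hwg : ∀ x, w x ≠ 0 → g x ∈ Icc c M) :
    Integrable (fun x => w x * log (g x)) μ := by
  refine (hw.norm.mul_const (max |log c| |log M|)).mono'
    (hw.aestronglyMeasurable.mul (measurable_log.comp hg).aestronglyMeasurable)
    (ae_of_all _ fun x => ?_)
  rcases eq_or_ne (w x) 0 with h0 | h0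
  · simp [h0]
  · rw [norm_mul, Real.norm_eq_abs (log _)]
    exact mul_le_mul_of_nonneg_left (abs_log_le_max_of_mem_Icc hc (hwg x h0)) (norm_nonneg _)

lemma hasDerivAt_integral_mul_rpow (hw : Integrable w μ) (hg : Measurable g) (hc : 0 < c)
    (hwg : ∀ x, w x ≠ 0 → g x ∈ Icc c M) :
    HasDerivAt (fun γ : ℝ => ∫ x, w x * g x ^ γ ∂μ) (∫ x, w x * log (g x) ∂μ) 0 := by
  set L := max |log c| |log M|
  have hderiv : ∀ x (γ : ℝ),
      HasDerivAt (fun γ => w x * g x ^ γ) (w x * (g x ^ γ * log (g x))) γ := by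
    intro x γ
    rcases eq_or_ne (w x) 0 with h0 | h0
    · simpa [h0] using hasDerivAt_const γ (0 : ℝ)
    · exact ((hasStrictDerivAt_const_rpow (hc.trans_le (hwg x h0).1) γ).hasDerivAt).const_mul _
  have hbound : ∀ x, ∀ γ ∈ Metric.ball (0 : ℝ) 1,
      ‖w x * (g x ^ γ * log (g x))‖ ≤ ‖w x‖ * (exp L * L) := by
    intro x γ hγ
    rcases eq_or_ne (w x) 0 with h0 | h0
    · simp [h0]
    have hlog := abs_log_le_max_of_mem_Icc hc (hwg x h0)
    have hγ' : |γ| ≤ 1 := by simpa using (Metric.mem_ball.mp hγ).le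
    have hpow : |g x ^ γ| ≤ exp L := (abs_rpow_le_exp_log_mul _ _).trans <| exp_le_exp.mpr <|
      calc log (g x) * γ ≤ |log (g x)| * |γ| := by rw [← abs_mul]; exact le_abs_self _
        _ ≤ L * 1 := mul_le_mul hlog hγ' (abs_nonneg _) ((abs_nonneg _).trans hlog)
        _ = L := mul_one L
    rw [norm_mul, norm_mul, Real.norm_eq_abs, Real.norm_eq_abs]
    gcongr
    exact hlog
  obtain ⟨-, hderivAt⟩ := hasDerivAt_integral_of_dominated_loc_of_deriv_le (μ := μ) (x₀ := (0 : ℝ))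
    (F := fun γ x => w x * g x ^ γ) (F' := fun γ x => w x * (g x ^ γ * log (g x)))
    (bound := fun x => ‖w x‖ * (exp L * L)) (Metric.ball_mem_nhds 0 one_pos)
    (Eventually.of_forall fun γ =>
      hw.aestronglyMeasurable.mul (hg.pow_const γ).aestronglyMeasurable)
    (by simpa using hw)
    (hw.aestronglyMeasurable.mul
      ((hg.pow_const 0).mul (measurable_log.comp hg)).aestronglyMeasurable)
    (ae_of_all _ hbound) (hw.norm.mul_const _) (ae_of_all _ fun x γ _ => hderiv x γ)
  simpa using hderivAt

lemma integral_rpow_one_add_eventuallyEq (hg : ∀ x, 0 ≤ g x) :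
    (fun γ : ℝ => ∫ x, g x ^ (1 + γ) ∂μ) =ᶠ[𝓝 0] fun γ => ∫ x, g x * g x ^ γ ∂μ := by
  have h : ∀ᶠ γ : ℝ in 𝓝 0, 1 + γ ≠ 0 :=
    ((continuous_const.add continuous_id).tendsto' 0 1 (by simp)).eventually_ne one_ne_zero
  filter_upwards [h] with γ hγ
  simp only [rpow_add' (hg _) hγ, rpow_one]

lemma hasDerivAt_integral_rpow_one_add_rpow_one_div (hg : Measurable g) (hg0 : ∀ x, 0 ≤ g x)
    (hc : 0 < c) (hgM : ∀ x, g x ≠ 0 → g x ∈ Icc c M) (hg1 : ∫ x, g x ∂μ = 1) :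
    HasDerivAt (fun γ : ℝ => (∫ x, g x ^ (1 + γ) ∂μ) ^ (1 / (1 + γ)))
      (∫ x, g x * log (g x) ∂μ) 0 :=
  (hasDerivAt_integral_mul_rpow (.of_integral_ne_zero (by simp [hg1])) hg hc hgM)
    |>.congr_of_eventuallyEq (integral_rpow_one_add_eventuallyEq hg0)
    |>.rpow_one_div_one_add (by simp [hg1])

lemma hasDerivAt_integral_mul_div_rpow_one_div_rpow (hw : Integrable w μ) (hg : Measurable g)
    (hg0 : ∀ x, 0 ≤ g x) (hc : 0 < c) (hwg : ∀ x, w x ≠ 0 → g x ∈ Icc c M)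
    (hgM : ∀ x, g x ≠ 0 → g x ∈ Icc c M) (hg1 : ∫ x, g x ∂μ = 1) :
    HasDerivAt (fun γ : ℝ =>
        ∫ x, w x * (g x / (∫ y, g y ^ (1 + γ) ∂μ) ^ (1 / (1 + γ))) ^ γ ∂μ)
      (∫ x, w x * log (g x) ∂μ) 0 := by
  have hsplit :
      (fun γ : ℝ => ∫ x, w x * (g x / (∫ y, g y ^ (1 + γ) ∂μ) ^ (1 / (1 + γ))) ^ γ ∂μ) =
      fun γ => (∫ x, w x * g x ^ γ ∂μ) / ((∫ y, g y ^ (1 + γ) ∂μ) ^ (1 / (1 + γ))) ^ γ := by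
    funext γ
    have hnorm : 0 ≤ (∫ y, g y ^ (1 + γ) ∂μ) ^ (1 / (1 + γ)) :=
      rpow_nonneg (integral_nonneg fun y => rpow_nonneg (hg0 y) _) _
    simp only [div_rpow (hg0 _) hnorm, ← integral_div, mul_div_assoc]
  rw [hsplit]
  simpa [hg1] using (hasDerivAt_integral_mul_rpow hw hg hc hwg).fun_div
    ((hasDerivAt_integral_rpow_one_add_rpow_one_div hg hg0 hc hgM hg1).rpow_self_of_eq_one
      (by simp [hg1])) (by simp [hg1])

end WeightedPowerIntegral

theorem stmt_3_general (d : ℕ) (q p : (Fin d → ℝ) → ℝ)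
    (hqm : Measurable q) (hpm : Measurable p)
    (hq0 : ∀ x, 0 ≤ q x) (hp0 : ∀ x, 0 ≤ p x)
    (hq1 : ∫ x, q x = 1) (hp1 : ∫ x, p x = 1)
    (hbdd : ∃ M : ℝ, ∀ x, q x ≤ M ∧ p x ≤ M)
    (hsupp : ∀ x, q x ≠ 0 ↔ p x ≠ 0)
    (hbelow : ∃ c : ℝ, 0 < c ∧ ∀ x, q x ≠ 0 → c ≤ q x ∧ c ≤ p x) :
    Tendsto (fun γ : ℝ =>
        (1/γ) * ((-(∫ x, q x * (p x / (∫ y, p y ^ (1 + γ)) ^ (1 / (1 + γ))) ^ γ)) + 1))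
      (nhdsWithin 0 {0}ᶜ)
      (nhds (-(∫ x, q x * Real.log (p x)))) ∧
    Tendsto (fun γ : ℝ =>
        (1/γ) * ((-(∫ x, q x * (p x / (∫ y, p y ^ (1 + γ)) ^ (1 / (1 + γ))) ^ γ))
          + (∫ x, q x ^ (1 + γ)) ^ (1 / (1 + γ))))
      (nhdsWithin 0 {0}ᶜ)
      (nhds (∫ x, q x * Real.log (q x / p x))) := by
  obtain ⟨M, hM⟩ := hbdd
  obtain ⟨c, hc, hcq⟩ := hbelow
  have hqi : Integrable q := .of_integral_ne_zero (by simp [hq1])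
  have hq_mem : ∀ x, q x ≠ 0 → q x ∈ Icc c M := fun x hx => ⟨(hcq x hx).1, (hM x).1⟩
  have hp_mem : ∀ x, q x ≠ 0 → p x ∈ Icc c M := fun x hx => ⟨(hcq x hx).2, (hM x).2⟩
  have hΦ := hasDerivAt_integral_mul_div_rpow_one_div_rpow hqi hpm hp0 hc hp_mem
    (fun x hx => hp_mem x ((hsupp x).2 hx)) hp1
  have hΨ := hasDerivAt_integral_rpow_one_add_rpow_one_div hqm hq0 hc hq_mem hq1
  have hKL : ∫ x, q x * log (q x / p x) = (∫ x, q x * log (q x)) - ∫ x, q x * log (p x) := by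
    rw [← integral_sub (integrable_mul_log_of_mem_Icc hqi hqm hc hq_mem)
      (integrable_mul_log_of_mem_Icc hqi hpm hc hp_mem)]
    refine integral_congr_ae (ae_of_all _ fun x => ?_)
    rcases eq_or_ne (q x) 0 with h0 | h0
    · simp [h0]
    · dsimp only
      rw [log_div h0 (hc.trans_le (hcq x h0).2).ne', mul_sub]
  constructor
  · simpa using hΦ.tendsto_one_div_mul_neg_add (hasDerivAt_const 0 1) (by simp [hq1])
  · rw [hKL]
    exact hΦ.tendsto_one_div_mul_neg_add hΨ (by simp [hq1, hp1])

/-- As γ → 0, `(1/γ)(C_γ(q,p) + 1)` tends to the ordinary cross-entropy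
`−∫ q log p`, and hence `D_γ(q‖p)` tends to `D_KL(q‖p) = ∫ q log(q/p)`. -/
theorem stmt_3 (d : ℕ) (q p : (Fin d → ℝ) → ℝ)
    (hqm : Measurable q) (hpm : Measurable p)
    (hq0 : ∀ x, 0 ≤ q x) (hp0 : ∀ x, 0 ≤ p x)
    (hq1 : ∫ x, q x = 1) (hp1 : ∫ x, p x = 1)
    (hbdd : ∃ M : ℝ, ∀ x, q x ≤ M ∧ p x ≤ M)
    (hsupp : ∀ x, q x ≠ 0 ↔ p x ≠ 0)
    (hbelow : ∃ c : ℝ, 0 < c ∧ ∀ x, q x ≠ 0 → c ≤ q x ∧ c ≤ p x)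
    (hql : Integrable (fun x => q x * Real.log (q x)))
    (hpl : Integrable (fun x => q x * Real.log (p x))) :
    Tendsto (fun γ : ℝ =>
        (1/γ) * ((-(∫ x, q x * (p x / (∫ y, p y ^ (1 + γ)) ^ (1 / (1 + γ))) ^ γ)) + 1))
      (nhdsWithin 0 {0}ᶜ)
      (nhds (-(∫ x, q x * Real.log (p x)))) ∧
    Tendsto (fun γ : ℝ =>
        (1/γ) * ((-(∫ x, q x * (p x / (∫ y, p y ^ (1 + γ)) ^ (1 / (1 + γ))) ^ γ))
          + (∫ x, q x ^ (1 + γ)) ^ (1 / (1 + γ))))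
      (nhdsWithin 0 {0}ᶜ)
      (nhds (∫ x, q x * Real.log (q x / p x))) :=
  stmt_3_general d q p hqm hpm hq0 hp0 hq1 hp1 hbdd hsupp hbelow
end

section
/- For q ~ t_d(μ, Σ, ν) with ν > 2 and γ = −2/(ν+d), the γ-power entropy satisfies H_γ(q) = −C_{ν,d}^{γ/(1+γ)} |Σ|^{−γ/(2(1+γ))} (1 + d/(ν−2))^{1/(1+γ)}; equivalently ∫ q(x)^{1+γ} dx = C_{ν,d}^γ |Σ|^{−γ/2}(1 + d/(ν−2)). -/
/-!
Translating by `μ`, whitening by `√S` and rescaling by `√ν` turns `tdens ^ r` into a multiple of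
`(1 + ‖y‖²) ^ (-p)` with `p = (ν + d) r / 2`. In polar coordinates the substitution
`t = y² / (1 + y²)` turns the radial integral into the Beta integral `B(d/2, p - d/2)`. For
`r = 1 + γ` we get `p = (ν + d)/2 - 1`, and `Γ(z + 1) = z Γ(z)` collapses the constants into
`(ν + d - 2)/(ν - 2) = 1 + d/(ν - 2)`.
-/

open MeasureTheory Matrix

noncomputable def tC (ν : ℝ) (d : ℕ) : ℝ :=
  Real.Gamma ((ν + d) / 2) / (Real.Gamma (ν / 2) * (ν * Real.pi) ^ ((d : ℝ) / 2))

noncomputable def tdens (d : ℕ) (μ : Fin d → ℝ) (S : Matrix (Fin d) (Fin d) ℝ)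
    (ν : ℝ) (x : Fin d → ℝ) : ℝ :=
  tC ν d * S.det ^ (-(1 : ℝ) / 2) *
    (1 + (1 / ν) * ((x - μ) ⬝ᵥ (S⁻¹ *ᵥ (x - μ)))) ^ (-(ν + d) / 2)

open Real Set Module

theorem integral_Ioo_rpow_mul_one_sub_rpow {a b : ℝ} (ha : 0 < a) (hb : 0 < b) :
    ∫ x in Ioo (0 : ℝ) 1, x ^ (a - 1) * (1 - x) ^ (b - 1)
      = Gamma a * Gamma b / Gamma (a + b) := by
  rw [← ProbabilityTheory.beta, ProbabilityTheory.beta_eq_betaIntegralReal a b ha hb,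
    Complex.betaIntegral, intervalIntegral.integral_of_le zero_le_one,
    integral_Ioc_eq_integral_Ioo, ← RCLike.re_to_complex, ← integral_re]
  · refine setIntegral_congr_fun measurableSet_Ioo fun x ⟨hx0, hx1⟩ ↦ ?_
    norm_cast
    rw [← Complex.ofReal_cpow hx0.le, ← Complex.ofReal_cpow (by linarith), RCLike.re_to_complex,
      ← Complex.ofReal_mul, Complex.ofReal_re]
  · exact (intervalIntegrable_iff_integrableOn_Ioo_of_le zero_le_one).1
      (Complex.betaIntegral_convergent (by simpa) (by simpa))

lemma image_sq_div_one_add_sq_Ioi : (fun y : ℝ ↦ y ^ 2 / (1 + y ^ 2)) '' Ioi 0 = Ioo 0 1 := by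
  ext u
  constructor
  · rintro ⟨y, hy : 0 < y, rfl⟩
    exact ⟨by positivity, (div_lt_one (by positivity)).2 (by linarith)⟩
  · rintro ⟨hu0, hu1⟩
    have h1u : 0 < 1 - u := by linarith
    refine ⟨√(u / (1 - u)), sqrt_pos.2 (div_pos hu0 h1u), ?_⟩
    simp only [sq_sqrt (div_pos hu0 h1u).le]
    field_simp
    ring

lemma injOn_sq_div_one_add_sq : InjOn (fun y : ℝ ↦ y ^ 2 / (1 + y ^ 2)) (Ioi 0) := by
  intro y (hy : 0 < y) z (hz : 0 < z) h
  rw [div_eq_div_iff (by positivity) (by positivity)] at h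
  nlinarith

lemma deriv_mul_beta_integrand_sq_div_one_add_sq {y : ℝ} (hy : 0 < y) (s p : ℝ) :
    2 * y / (1 + y ^ 2) ^ 2 * ((y ^ 2 / (1 + y ^ 2)) ^ (s / 2 - 1) *
      (1 - y ^ 2 / (1 + y ^ 2)) ^ (p - s / 2 - 1))
      = 2 * (y ^ (s - 1) * (1 + y ^ 2) ^ (-p)) := by
  set A := 1 + y ^ 2
  have hA : 0 < A := by positivity
  have h1 : 1 - y ^ 2 / A = A⁻¹ := by field_simp; ring
  have h2 : (y ^ 2) ^ (s / 2 - 1) = y ^ (s - 1) / y := by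
    rw [← rpow_natCast_mul hy.le, eq_div_iff hy.ne', ← rpow_add_one hy.ne']
    push_cast; ring_nf
  have h3 : A ^ (-p) = A ^ (-(s / 2 - 1)) * A ^ (-(p - s / 2 - 1)) / A ^ 2 := by
    rw [eq_div_iff (by positivity), ← rpow_add hA, ← rpow_natCast, ← rpow_add hA]
    push_cast; ring_nf
  rw [h1, div_rpow (by positivity) hA.le, h2, inv_rpow hA.le, h3, rpow_neg hA.le,
    rpow_neg hA.le]
  field_simp

theorem integral_Ioi_rpow_mul_one_add_sq_rpow_neg {s p : ℝ} (hs : 0 < s) (hsp : s < 2 * p) :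
    ∫ y in Ioi (0 : ℝ), y ^ (s - 1) * (1 + y ^ 2) ^ (-p)
      = Gamma (s / 2) * Gamma (p - s / 2) / (2 * Gamma p) := by
  have hderiv (y : ℝ) (_ : y ∈ Ioi (0 : ℝ)) : HasDerivWithinAt (fun y : ℝ ↦ y ^ 2 / (1 + y ^ 2))
      (2 * y / (1 + y ^ 2) ^ 2) (Ioi 0) y := by
    have hA : 1 + y ^ 2 ≠ 0 := by positivity
    refine ((hasDerivAt_pow 2 y).div ((hasDerivAt_pow 2 y).const_add 1) hA).hasDerivWithinAt
      |>.congr_deriv ?_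
    field_simp
    ring
  have key := integral_image_eq_integral_abs_deriv_smul measurableSet_Ioi hderiv
    injOn_sq_div_one_add_sq fun u ↦ u ^ (s / 2 - 1) * (1 - u) ^ (p - s / 2 - 1)
  rw [image_sq_div_one_add_sq_Ioi, integral_Ioo_rpow_mul_one_sub_rpow (by positivity)
    (by linarith), add_sub_cancel, setIntegral_congr_fun measurableSet_Ioi fun y (hy : 0 < y) ↦ by
      rw [smul_eq_mul, abs_of_pos (by positivity), deriv_mul_beta_integrand_sq_div_one_add_sq hy],
    integral_const_mul] at key
  have hp : 0 < Gamma p := Gamma_pos_of_pos (by linarith)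
  rw [div_eq_iff hp.ne'] at key
  rw [eq_div_iff (by positivity)]
  linarith

theorem integral_one_add_norm_sq_rpow_neg {E : Type*} [NormedAddCommGroup E]
    [InnerProductSpace ℝ E] [FiniteDimensional ℝ E] [MeasurableSpace E] [BorelSpace E]
    [Nontrivial E] {p : ℝ} (hp : (finrank ℝ E : ℝ) / 2 < p) :
    ∫ x : E, (1 + ‖x‖ ^ 2) ^ (-p)
      = π ^ ((finrank ℝ E : ℝ) / 2) * Gamma (p - finrank ℝ E / 2) / Gamma p := by
  have hn : 0 < (finrank ℝ E : ℝ) := by exact_mod_cast finrank_pos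
  have hpow : ∫ y in Ioi (0 : ℝ), y ^ (finrank ℝ E - 1) * (1 + y ^ 2) ^ (-p)
      = ∫ y in Ioi (0 : ℝ), y ^ ((finrank ℝ E : ℝ) - 1) * (1 + y ^ 2) ^ (-p) := by
    refine setIntegral_congr_fun measurableSet_Ioi fun y _ ↦ ?_
    rw [← rpow_natCast, Nat.cast_sub (by exact_mod_cast hn : 1 ≤ finrank ℝ E), Nat.cast_one]
  rw [integral_fun_norm_addHaar volume fun r ↦ (1 + r ^ 2) ^ (-p), measureReal_def,
    InnerProductSpace.volume_ball, ENNReal.ofReal_one, one_pow, one_mul,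
    ENNReal.toReal_ofReal (by positivity)]
  simp only [smul_eq_mul, nsmul_eq_mul]
  rw [hpow, integral_Ioi_rpow_mul_one_add_sq_rpow_neg hn (by linarith),
    Gamma_add_one (by positivity), ← rpow_natCast, sqrt_eq_rpow, ← rpow_mul pi_pos.le]
  have : 0 < Gamma (finrank ℝ E / 2) := Gamma_pos_of_pos (by positivity)
  have : 0 < Gamma p := Gamma_pos_of_pos (by linarith)
  field_simp

theorem integral_one_add_dotProduct_self_rpow_neg (d : ℕ) {p : ℝ} (hp : (d : ℝ) / 2 < p) :
    ∫ x : Fin d → ℝ, (1 + x ⬝ᵥ x) ^ (-p)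
      = π ^ ((d : ℝ) / 2) * Gamma (p - d / 2) / Gamma p := by
  rcases d.eq_zero_or_pos with rfl | hd
  · have : Gamma p ≠ 0 := (Gamma_pos_of_pos (by simpa using hp)).ne'
    simp [this, volume_pi, measureReal_def]
  have : Nonempty (Fin d) := ⟨⟨0, hd⟩⟩
  have key := integral_one_add_norm_sq_rpow_neg (E := EuclideanSpace ℝ (Fin d)) (p := p)
  rw [finrank_euclideanSpace_fin] at key
  rw [← key hp, ← (EuclideanSpace.volume_preserving_symm_measurableEquiv_toLp _).integral_comp
    (MeasurableEquiv.toLp 2 (Fin d → ℝ)).symm.measurableEmbedding]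
  congr with x
  rw [EuclideanSpace.norm_sq_eq]
  simp [dotProduct, sq]

theorem integral_comp_mulVec {ι E : Type*} [Fintype ι] [DecidableEq ι] [NormedAddCommGroup E]
    [NormedSpace ℝ E] {M : Matrix ι ι ℝ} (hM : M.det ≠ 0) (f : (ι → ℝ) → E) :
    ∫ y, f (M *ᵥ y) = |M.det|⁻¹ • ∫ x, f x := by
  have : Invertible M := M.invertibleOfIsUnitDet (isUnit_iff_ne_zero.2 hM)
  have hemb : MeasurableEmbedding (toLin' M) :=
    (toLinearEquiv' M this).toContinuousLinearEquiv.toHomeomorph.measurableEmbedding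
  rw [← ENNReal.toReal_ofReal (inv_nonneg.2 (abs_nonneg M.det)), ← integral_smul_measure,
    ← abs_inv, ← Real.map_matrix_volume_pi_eq_smul_volume_pi hM, hemb.integral_map]
  rfl

open scoped MatrixOrder

section

variable {ι : Type*} [Fintype ι] [DecidableEq ι] {S : Matrix ι ι ℝ}

lemma Matrix.PosSemidef.det_sqrt_real (hS : S.PosSemidef) : (CFC.sqrt S).det = √S.det := by
  simpa using hS.det_sqrt

lemma Matrix.PosDef.sqrt_mulVec_dotProduct_inv_mulVec (hS : S.PosDef) (y : ι → ℝ) :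
    (CFC.sqrt S *ᵥ y) ⬝ᵥ (S⁻¹ *ᵥ (CFC.sqrt S *ᵥ y)) = y ⬝ᵥ y := by
  have hQT : (CFC.sqrt S)ᵀ = CFC.sqrt S := (CFC.sqrt_nonneg S).posSemidef.isHermitian
  have hQ : IsUnit (CFC.sqrt S).det := by
    rw [isUnit_iff_ne_zero, hS.posSemidef.det_sqrt_real]
    exact (sqrt_pos.2 hS.det_pos).ne'
  have hQS : CFC.sqrt S * (S⁻¹ * CFC.sqrt S) = 1 := by
    have hS_inv : S⁻¹ = (CFC.sqrt S)⁻¹ * (CFC.sqrt S)⁻¹ := by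
      rw [← Matrix.mul_inv_rev, CFC.sqrt_mul_sqrt_self S hS.posSemidef.nonneg]
    rw [hS_inv, Matrix.mul_assoc, mul_nonsing_inv_cancel_left _ _ hQ, nonsing_inv_mul _ hQ]
  rw [mulVec_mulVec, dotProduct_mulVec, ← vecMul_transpose, hQT, vecMul_vecMul, hQS, vecMul_one]

theorem integral_comp_dotProduct_inv_mulVec_sub {E : Type*} [NormedAddCommGroup E]
    [NormedSpace ℝ E] (hS : S.PosDef) (μ : ι → ℝ) (g : ℝ → E) :
    ∫ x, g ((x - μ) ⬝ᵥ (S⁻¹ *ᵥ (x - μ))) = √S.det • ∫ y : ι → ℝ, g (y ⬝ᵥ y) := by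
  have hdet := hS.posSemidef.det_sqrt_real
  have hdet_pos : 0 < √S.det := sqrt_pos.2 hS.det_pos
  rw [integral_sub_right_eq_self (fun x ↦ g (x ⬝ᵥ (S⁻¹ *ᵥ x))) μ]
  simp_rw [← hS.sqrt_mulVec_dotProduct_inv_mulVec]
  rw [integral_comp_mulVec (hdet ▸ hdet_pos.ne') fun x ↦ g (x ⬝ᵥ (S⁻¹ *ᵥ x)), hdet,
    abs_of_pos hdet_pos, smul_inv_smul₀ hdet_pos.ne']

lemma one_add_inv_mul_dotProduct_inv_mulVec_pos {ν : ℝ} (hν : 0 < ν) (hS : S.PosDef)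
    (v : ι → ℝ) : 0 < 1 + 1 / ν * (v ⬝ᵥ (S⁻¹ *ᵥ v)) := by
  have : 0 ≤ v ⬝ᵥ (S⁻¹ *ᵥ v) := hS.inv.posSemidef.dotProduct_mulVec_nonneg v
  positivity

end

theorem integral_one_add_inv_mul_dotProduct_self_rpow_neg (d : ℕ) {ν p : ℝ} (hν : 0 < ν)
    (hp : (d : ℝ) / 2 < p) :
    ∫ y : Fin d → ℝ, (1 + 1 / ν * (y ⬝ᵥ y)) ^ (-p)
      = ν ^ ((d : ℝ) / 2) * (π ^ ((d : ℝ) / 2) * Gamma (p - d / 2) / Gamma p) := by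
  have hscale (y : Fin d → ℝ) : 1 / ν * (y ⬝ᵥ y) = (√ν)⁻¹ • y ⬝ᵥ (√ν)⁻¹ • y := by
    rw [smul_dotProduct, dotProduct_smul, smul_eq_mul, smul_eq_mul, ← mul_assoc, ← mul_inv,
      mul_self_sqrt hν.le, one_div]
  simp_rw [hscale]
  rw [Measure.integral_comp_inv_smul_of_nonneg volume (fun y ↦ (1 + y ⬝ᵥ y) ^ (-p))
    (sqrt_nonneg ν), finrank_fin_fun, integral_one_add_dotProduct_self_rpow_neg d hp, smul_eq_mul,
    ← rpow_natCast, sqrt_eq_rpow, ← rpow_mul hν.le, one_div_mul_eq_div]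

theorem integral_one_add_inv_mul_dotProduct_inv_mulVec_rpow_neg {d : ℕ} {ν p : ℝ} (hν : 0 < ν)
    (hp : (d : ℝ) / 2 < p) (μ : Fin d → ℝ) {S : Matrix (Fin d) (Fin d) ℝ} (hS : S.PosDef) :
    ∫ x, (1 + 1 / ν * ((x - μ) ⬝ᵥ (S⁻¹ *ᵥ (x - μ)))) ^ (-p)
      = √S.det * (ν * π) ^ ((d : ℝ) / 2) * Gamma (p - d / 2) / Gamma p := by
  rw [integral_comp_dotProduct_inv_mulVec_sub hS μ fun t ↦ (1 + 1 / ν * t) ^ (-p),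
    integral_one_add_inv_mul_dotProduct_self_rpow_neg d hν hp, smul_eq_mul,
    mul_rpow hν.le pi_pos.le]
  ring

lemma tC_pos {ν : ℝ} (hν : 0 < ν) (d : ℕ) : 0 < tC ν d := by
  have := Gamma_pos_of_pos (by positivity : 0 < (ν + d) / 2)
  have := Gamma_pos_of_pos (half_pos hν)
  unfold tC
  positivity

theorem integral_tdens_rpow {d : ℕ} {ν r : ℝ} (hν : 0 < ν) (hr : d < (ν + d) * r)
    (μ : Fin d → ℝ) {S : Matrix (Fin d) (Fin d) ℝ} (hS : S.PosDef) :
    ∫ x, tdens d μ S ν x ^ r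
      = tC ν d ^ r * S.det ^ ((1 - r) / 2) * (ν * π) ^ ((d : ℝ) / 2)
        * Gamma ((ν + d) * r / 2 - d / 2) / Gamma ((ν + d) * r / 2) := by
  have hdet := hS.det_pos
  have hpt (x : Fin d → ℝ) : tdens d μ S ν x ^ r = tC ν d ^ r * S.det ^ (-r / 2) *
      (1 + 1 / ν * ((x - μ) ⬝ᵥ (S⁻¹ *ᵥ (x - μ)))) ^ (-((ν + d) * r / 2)) := by
    have hq := one_add_inv_mul_dotProduct_inv_mulVec_pos hν hS (x - μ)
    have hc := tC_pos hν d
    rw [tdens, mul_rpow (by positivity) (by positivity), mul_rpow hc.le (by positivity),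
      ← rpow_mul hdet.le, ← rpow_mul hq.le]
    ring_nf
  simp_rw [hpt]
  rw [integral_const_mul, integral_one_add_inv_mul_dotProduct_inv_mulVec_rpow_neg hν
    (by linarith) μ hS, sqrt_eq_rpow]
  have hdet_split : S.det ^ ((1 - r) / 2) = S.det ^ (-r / 2) * S.det ^ (1 / 2 : ℝ) := by
    rw [← rpow_add hdet]; ring_nf
  rw [hdet_split]
  ring

lemma tC_mul_rpow_mul_Gamma_div_Gamma {ν : ℝ} (hν : 2 < ν) (d : ℕ) :
    tC ν d * (ν * π) ^ ((d : ℝ) / 2) * Gamma ((ν - 2) / 2) / Gamma ((ν + d - 2) / 2)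
      = 1 + d / (ν - 2) := by
  have hν2 : 0 < (ν - 2) / 2 := by linarith
  have hνd2 : 0 < (ν + d - 2) / 2 := by have := d.cast_nonneg (α := ℝ); linarith
  have : ν - 2 ≠ 0 := by linarith
  have h1 : Gamma (ν / 2) = (ν - 2) / 2 * Gamma ((ν - 2) / 2) := by
    rw [← Gamma_add_one hν2.ne']; ring_nf
  have h2 : Gamma ((ν + d) / 2) = (ν + d - 2) / 2 * Gamma ((ν + d - 2) / 2) := by
    rw [← Gamma_add_one hνd2.ne']; ring_nf
  have := Gamma_pos_of_pos hν2
  have := Gamma_pos_of_pos hνd2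
  have : 0 < (ν * π) ^ ((d : ℝ) / 2) := by positivity
  rw [tC, h1, h2]
  field_simp
  ring

/-- The γ-power entropy of a multivariate t-distribution, ν > 2, γ = −2/(ν+d):
`∫ q^{1+γ} = C_{ν,d}^γ |Σ|^{−γ/2} (1 + d/(ν−2))` and the induced formula for H_γ. -/
theorem stmt_6 (d : ℕ) (ν γ : ℝ) (hν : 2 < ν) (hγ : γ = -2 / (ν + d))
    (μ : Fin d → ℝ) (S : Matrix (Fin d) (Fin d) ℝ) (hS : S.PosDef) :
    (∫ x, tdens d μ S ν x ^ (1 + γ))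
      = tC ν d ^ γ * S.det ^ (-γ / 2) * (1 + d / (ν - 2)) ∧
    -((∫ x, tdens d μ S ν x ^ (1 + γ)) ^ (1 / (1 + γ)))
      = -(tC ν d ^ (γ / (1 + γ)) * S.det ^ (-γ / (2 * (1 + γ))) *
          (1 + d / (ν - 2)) ^ (1 / (1 + γ))) := by
  have hν0 : 0 < ν := by linarith
  have hc := tC_pos hν0 d
  have hdet := hS.det_pos
  have hexp : (ν + d) * (1 + γ) / 2 = (ν + d - 2) / 2 := by
    rw [hγ]; field_simp; ring
  have hint : ∫ x, tdens d μ S ν x ^ (1 + γ)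
      = tC ν d ^ γ * S.det ^ (-γ / 2) * (1 + d / (ν - 2)) := by
    rw [integral_tdens_rpow hν0 (by linarith) μ hS, hexp, ← tC_mul_rpow_mul_Gamma_div_Gamma hν,
      rpow_add hc, rpow_one]
    ring_nf
  refine ⟨hint, ?_⟩
  have hK : 0 < 1 + d / (ν - 2) := by
    have : 0 < ν - 2 := by linarith
    positivity
  rw [hint, mul_rpow (by positivity) hK.le, mul_rpow (by positivity) (by positivity),
    ← rpow_mul hc.le, ← rpow_mul hdet.le, mul_one_div, div_mul_div_comm, mul_one]
end

section
/- Let λ ~ χ²(ν), z|λ ~ N_m(0, (ν/λ)I), x|z,λ ~ N_n(μ(z), (ν/λ)σ²I). Then the joint marginal density of (x,z) (integrating out λ) is proportional to [1 + ν^{−1}(‖z‖² + σ^{−2}‖x−μ(z)‖²)]^{−(ν+m+n)/2}, i.e. it equals the t³VAE joint model p(x,z) = C_{ν,m+n}σ^{−n}[1 + ν^{−1}(‖z‖² + σ^{−2}‖x−μ(z)‖²)]^{−(ν+m+n)/2}. -/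
open MeasureTheory

section Aux

open Real

private lemma stmt12_pointwise (ν A B σ : ℝ) (hν : 0 < ν) (hσ : 0 < σ)
    (l : ℝ) (hl : 0 < l) (m n : ℕ) :
    (2 * π * (ν / l) * σ ^ 2) ^ (-(n : ℝ) / 2) *
      Real.exp (-B / (2 * (ν / l) * σ ^ 2)) *
    ((2 * π * (ν / l)) ^ (-(m : ℝ) / 2) *
      Real.exp (-A / (2 * (ν / l)))) *
    (l ^ (ν / 2 - 1) * Real.exp (-l / 2) / (2 ^ (ν / 2) * Real.Gamma (ν / 2)))
    = ((2 * π * ν * σ ^ 2) ^ (-(n : ℝ) / 2) * (2 * π * ν) ^ (-(m : ℝ) / 2)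
        / (2 ^ (ν / 2) * Real.Gamma (ν / 2))) *
      (l ^ ((ν + m + n) / 2 - 1) *
        Real.exp (-(((1 + (A + B / σ ^ 2) / ν) / 2) * l))) := by
  have h2πν : (0:ℝ) < 2 * π * ν := by positivity
  have h1 : 2 * π * (ν / l) * σ ^ 2 = (2 * π * ν * σ ^ 2) / l := by ring
  have h2 : 2 * π * (ν / l) = (2 * π * ν) / l := by ring
  rw [h1, h2, Real.div_rpow (by positivity) hl.le, Real.div_rpow h2πν.le hl.le]
  rw [show ((ν + m + n) / 2 - 1 : ℝ) = (ν/2 - 1) + (m/2 + n/2) by ring,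
    Real.rpow_add hl, Real.rpow_add hl]
  rw [show (-(n:ℝ)/2 : ℝ) = -(n/2) by ring, show (-(m:ℝ)/2 : ℝ) = -(m/2) by ring,
    Real.rpow_neg hl.le (n/2), Real.rpow_neg hl.le ((m:ℝ)/2)]
  have hexp : -B / (2 * (ν / l) * σ ^ 2) + (-A / (2 * (ν / l)) + -l / 2)
      = -(((1 + (A + B / σ ^ 2) / ν) / 2) * l) := by
    field_simp
    ring
  rw [← hexp, Real.exp_add, Real.exp_add]
  have hln : (l:ℝ) ^ ((n:ℝ)/2) ≠ 0 := by positivity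
  have hlm : (l:ℝ) ^ ((m:ℝ)/2) ≠ 0 := by positivity
  field_simp

private lemma stmt12_const (ν σ T : ℝ) (hν : 0 < ν) (hσ : 0 < σ) (hT : 0 < T) (m n : ℕ) :
    ((2 * π * ν * σ ^ 2) ^ (-(n : ℝ) / 2) * (2 * π * ν) ^ (-(m : ℝ) / 2)
        / (2 ^ (ν / 2) * Real.Gamma (ν / 2))) *
      ((1 / (T / 2)) ^ ((ν + m + n) / 2) * Real.Gamma ((ν + m + n) / 2))
    = (Real.Gamma ((ν + (m + n : ℕ)) / 2) /
        (Real.Gamma (ν / 2) * (ν * π) ^ (((m + n : ℕ) : ℝ) / 2))) *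
      (σ ^ n)⁻¹ * T ^ (-(ν + m + n) / 2) := by
  have hπ : (0:ℝ) < π := pi_pos
  obtain ⟨Q, hQdef, hQ⟩ : ∃ Q : ℝ, ν * π = Q ∧ 0 < Q := ⟨ν * π, rfl, by positivity⟩
  have hσ2 : ((σ^2 : ℝ)) ^ (-(n:ℝ)/2) = (σ ^ n)⁻¹ := by
    rw [← Real.rpow_natCast σ 2, ← Real.rpow_natCast σ n, ← Real.rpow_mul hσ.le,
      show ((2:ℕ):ℝ)*(-(n:ℝ)/2) = -(n:ℝ) by push_cast; ring, Real.rpow_neg hσ.le]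
  have e1 : (1 / (T/2) : ℝ) = 2 / T := by field_simp
  rw [Real.mul_rpow (by positivity) (by positivity), hσ2, e1,
    Real.div_rpow (by norm_num) hT.le,
    show ((ν + m + n) / 2 : ℝ) = ν/2 + ((m:ℝ)+n)/2 by ring,
    Real.rpow_add two_pos,
    show (-(ν + m + n) / 2 : ℝ) = -(ν/2 + ((m:ℝ)+n)/2) by ring,
    Real.rpow_neg hT.le,
    show ((2 * π * ν : ℝ)) = 2 * Q by rw [← hQdef]; ring,
    Real.mul_rpow (by norm_num) hQ.le,
    Real.mul_rpow (by norm_num) hQ.le, hQdef,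
    show ((((m + n : ℕ)) : ℝ) / 2) = ((m:ℝ)+n)/2 by push_cast; ring,
    show (-(n:ℝ)/2) = -((n:ℝ)/2) by ring, show (-(m:ℝ)/2) = -((m:ℝ)/2) by ring,
    Real.rpow_neg (by norm_num : (0:ℝ) ≤ 2), Real.rpow_neg (by norm_num : (0:ℝ) ≤ 2),
    Real.rpow_neg hQ.le, Real.rpow_neg hQ.le]
  have h2 : ((2:ℝ)) ^ ((m:ℝ)/2) * 2 ^ ((n:ℝ)/2) = 2 ^ (((m:ℝ)+n)/2) := by
    rw [← Real.rpow_add two_pos]; ring_nf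
  have h3 : Q ^ ((m:ℝ)/2) * Q ^ ((n:ℝ)/2) = Q ^ (((m:ℝ)+n)/2) := by
    rw [← Real.rpow_add hQ]; ring_nf
  have hG : Real.Gamma (ν/2) ≠ 0 := (Real.Gamma_pos_of_pos (by positivity)).ne'
  have hcast : ((ν + (m + n : ℕ)) / 2 : ℝ) = ν/2 + ((m:ℝ)+n)/2 := by push_cast; ring
  rw [hcast, ← h2, ← h3]
  have h2m : ((2:ℝ)) ^ ((m:ℝ)/2) ≠ 0 := by positivity
  have h2n : ((2:ℝ)) ^ ((n:ℝ)/2) ≠ 0 := by positivity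
  have hQm : Q ^ ((m:ℝ)/2) ≠ 0 := by positivity
  have hQn : Q ^ ((n:ℝ)/2) ≠ 0 := by positivity
  have h2ν : ((2:ℝ)) ^ (ν/2) ≠ 0 := by positivity
  have hTs : T ^ (ν/2 + ((m:ℝ)+n)/2) ≠ 0 := by positivity
  field_simp

end Aux

/-- Integrating out the latent precision λ ~ χ²(ν) in the Bayesian hierarchy
`z|λ ~ N_m(0,(ν/λ)I)`, `x|z,λ ~ N_n(μ(z),(ν/λ)σ²I)` yields the t³VAE joint model. -/
theorem stmt_12 (m n : ℕ) (ν σ : ℝ) (hν : 0 < ν) (hσ : 0 < σ)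
    (μ : (Fin m → ℝ) → Fin n → ℝ) :
    ∀ (x : Fin n → ℝ) (z : Fin m → ℝ),
      (∫ l in Set.Ioi (0 : ℝ),
          (2 * Real.pi * (ν / l) * σ ^ 2) ^ (-(n : ℝ) / 2) *
            Real.exp (-(∑ j, (x j - μ z j) ^ 2) / (2 * (ν / l) * σ ^ 2)) *
          ((2 * Real.pi * (ν / l)) ^ (-(m : ℝ) / 2) *
            Real.exp (-(∑ i, z i ^ 2) / (2 * (ν / l)))) *
          (l ^ (ν / 2 - 1) * Real.exp (-l / 2) /
            (2 ^ (ν / 2) * Real.Gamma (ν / 2))))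
        = tC ν (m + n) * (σ ^ n)⁻¹ *
          (1 + (1 / ν) * ((∑ i, z i ^ 2) + (∑ j, (x j - μ z j) ^ 2) / σ ^ 2))
            ^ (-(ν + m + n) / 2) := by
  intro x z
  set A : ℝ := ∑ i, z i ^ 2 with hA
  set B : ℝ := ∑ j, (x j - μ z j) ^ 2 with hB
  have hA0 : 0 ≤ A := Finset.sum_nonneg fun i _ => sq_nonneg _
  have hB0 : 0 ≤ B := Finset.sum_nonneg fun j _ => sq_nonneg _
  set K : ℝ := (2 * Real.pi * ν * σ ^ 2) ^ (-(n : ℝ) / 2) *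
      (2 * Real.pi * ν) ^ (-(m : ℝ) / 2) / (2 ^ (ν / 2) * Real.Gamma (ν / 2)) with hK
  set r : ℝ := (1 + (A + B / σ ^ 2) / ν) / 2 with hr
  have hr0 : 0 < r := by
    have : 0 ≤ (A + B / σ ^ 2) / ν := by positivity
    rw [hr]; linarith
  have hs0 : 0 < (ν + m + n) / 2 := by positivity
  have hint : (∫ l in Set.Ioi (0 : ℝ),
      (2 * Real.pi * (ν / l) * σ ^ 2) ^ (-(n : ℝ) / 2) *
        Real.exp (-B / (2 * (ν / l) * σ ^ 2)) *
      ((2 * Real.pi * (ν / l)) ^ (-(m : ℝ) / 2) *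
        Real.exp (-A / (2 * (ν / l)))) *
      (l ^ (ν / 2 - 1) * Real.exp (-l / 2) / (2 ^ (ν / 2) * Real.Gamma (ν / 2))))
      = ∫ l in Set.Ioi (0 : ℝ), K * (l ^ ((ν + m + n) / 2 - 1) * Real.exp (-(r * l))) := by
    refine setIntegral_congr_fun measurableSet_Ioi fun l hl => ?_
    exact stmt12_pointwise ν A B σ hν hσ l hl m n
  rw [hint, MeasureTheory.integral_const_mul,
    Real.integral_rpow_mul_exp_neg_mul_Ioi hs0 hr0]
  have hT : (0:ℝ) < 1 + (A + B / σ ^ 2) / ν := by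
    have : 0 ≤ (A + B / σ ^ 2) / ν := by positivity
    linarith
  have := stmt12_const ν σ (1 + (A + B / σ ^ 2) / ν) hν hσ hT m n
  rw [hK, hr, this]
  have : (1 + 1 / ν * (A + B / σ ^ 2)) = 1 + (A + B / σ ^ 2) / ν := by ring
  rw [this, tC]
end

section
/- For the shallow t³VAE with linear decoder mean μ_θ(z) = Wz + b, the joint density p(x,z) ∝ [1 + (1/(νσ²))·(x−b, z)^⊤ M (x−b, z)]^{−(ν+m+n)/2} with M = [[I, −W],[−W^⊤, W^⊤W + σ²I]] equals the multivariate t-density t_{m+n}((b,0), [[WW^⊤+σ²I, W],[W^⊤, I]], ν); in particular, σ²·M is the inverse of the block scale matrix [[WW^⊤+σ²I, W],[W^⊤, I]]. -/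
open Matrix

/-- The shallow t³VAE joint density equals the multivariate t-density
`t_{m+n}((b,0), [[WWᵀ+σ²I, W],[Wᵀ, I]], ν)`; in particular the block scale
matrix has inverse `σ⁻²·[[I, −W],[−Wᵀ, WᵀW+σ²I]]`. -/
theorem stmt_14 (m n : ℕ) (ν σ : ℝ) (hν : 0 < ν) (hσ : 0 < σ)
    (W : Matrix (Fin n) (Fin m) ℝ) (b : Fin n → ℝ) :
    (Matrix.fromBlocks (W * Wᵀ + σ ^ 2 • (1 : Matrix (Fin n) (Fin n) ℝ)) W
        Wᵀ (1 : Matrix (Fin m) (Fin m) ℝ))⁻¹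
      = (σ ^ 2)⁻¹ •
        Matrix.fromBlocks (1 : Matrix (Fin n) (Fin n) ℝ) (-W)
          (-Wᵀ) (Wᵀ * W + σ ^ 2 • (1 : Matrix (Fin m) (Fin m) ℝ)) ∧
    ∀ (x : Fin n → ℝ) (z : Fin m → ℝ),
      tC ν (m + n) * (σ ^ n)⁻¹ *
        (1 + (1 / (ν * σ ^ 2)) *
          (Sum.elim (x - b) z ⬝ᵥ
            ((Matrix.fromBlocks (1 : Matrix (Fin n) (Fin n) ℝ) (-W)
              (-Wᵀ) (Wᵀ * W + σ ^ 2 • (1 : Matrix (Fin m) (Fin m) ℝ)))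
                *ᵥ Sum.elim (x - b) z))) ^ (-(ν + m + n) / 2)
      = tC ν (m + n) *
          (Matrix.fromBlocks (W * Wᵀ + σ ^ 2 • (1 : Matrix (Fin n) (Fin n) ℝ)) W
            Wᵀ (1 : Matrix (Fin m) (Fin m) ℝ)).det ^ (-(1 : ℝ) / 2) *
          (1 + (1 / ν) *
            (Sum.elim (x - b) z ⬝ᵥ
              ((Matrix.fromBlocks (W * Wᵀ + σ ^ 2 • (1 : Matrix (Fin n) (Fin n) ℝ)) W
                Wᵀ (1 : Matrix (Fin m) (Fin m) ℝ))⁻¹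
                  *ᵥ Sum.elim (x - b) z))) ^ (-(ν + m + n) / 2) := by
  set A := Matrix.fromBlocks (W * Wᵀ + σ ^ 2 • (1 : Matrix (Fin n) (Fin n) ℝ)) W
      Wᵀ (1 : Matrix (Fin m) (Fin m) ℝ) with hA
  set M := Matrix.fromBlocks (1 : Matrix (Fin n) (Fin n) ℝ) (-W)
      (-Wᵀ) (Wᵀ * W + σ ^ 2 • (1 : Matrix (Fin m) (Fin m) ℝ)) with hM
  have hσ2 : (σ ^ 2 : ℝ) ≠ 0 := by positivity
  have hAM : A * M = σ ^ 2 • (1 : Matrix (Fin n ⊕ Fin m) (Fin n ⊕ Fin m) ℝ) := by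
    rw [hA, hM, Matrix.fromBlocks_multiply, ← Matrix.fromBlocks_one,
      Matrix.fromBlocks_smul]
    rw [Matrix.fromBlocks_inj]
    refine ⟨?_, ?_, ?_, ?_⟩
    · simp only [Matrix.mul_neg, Matrix.add_mul, Matrix.mul_add, Matrix.mul_smul,
        Matrix.smul_mul, Matrix.mul_one, Matrix.one_mul, Matrix.mul_assoc,
        smul_zero]
      abel
    · simp only [Matrix.mul_neg, Matrix.add_mul, Matrix.mul_add, Matrix.mul_smul,
        Matrix.smul_mul, Matrix.mul_one, Matrix.one_mul, Matrix.mul_assoc,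
        smul_zero]
      abel
    · simp only [Matrix.mul_neg, Matrix.add_mul, Matrix.mul_add, Matrix.mul_smul,
        Matrix.smul_mul, Matrix.mul_one, Matrix.one_mul, Matrix.mul_assoc,
        smul_zero]
      abel
    · simp only [Matrix.mul_neg, Matrix.add_mul, Matrix.mul_add, Matrix.mul_smul,
        Matrix.smul_mul, Matrix.mul_one, Matrix.one_mul, Matrix.mul_assoc,
        smul_zero]
      abel
  have hinv : A * ((σ ^ 2)⁻¹ • M) = 1 := by
    rw [Matrix.mul_smul, hAM, smul_smul, inv_mul_cancel₀ hσ2, one_smul]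
  have hAinv : A⁻¹ = (σ ^ 2)⁻¹ • M := Matrix.inv_eq_right_inv hinv
  have hdet : A.det = (σ ^ 2) ^ n := by
    have : Invertible (1 : Matrix (Fin m) (Fin m) ℝ) := invertibleOne
    rw [hA, Matrix.det_fromBlocks₂₂]
    simp [Matrix.det_smul]
  refine ⟨hAinv, fun x z => ?_⟩
  rw [hdet, hAinv]
  have h1 : ((σ ^ 2) ^ n : ℝ) ^ (-(1:ℝ) / 2) = (σ ^ n)⁻¹ := by
    rw [← pow_mul, ← Real.rpow_natCast σ (2 * n), ← Real.rpow_mul hσ.le,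
      show ((2 * n : ℕ) : ℝ) * (-(1:ℝ) / 2) = -(n : ℝ) by push_cast; ring,
      Real.rpow_neg hσ.le, Real.rpow_natCast]
  rw [h1, Matrix.smul_mulVec, dotProduct_smul, smul_eq_mul]
  congr 2
  ring
end
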